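/- Let θ ≥ 0 and suppose π̂, r : V → ℝ satisfy, for every t ∈ V, the invariant π_s(t) = π̂(t) + Σ_{u∈V} r(u)·π_u(t), with 0 ≤ r(u) ≤ θ·d(u) for every u ∈ V. Then Σ_{t∈V} |π_s(t) − π̂(t)| ≤ θ·‖A‖₁. In particular, taking θ = ε/‖A‖₁ for ε > 0, the reserve vector π̂ approximates π_s within ℓ1-error ε. -/

import Mathlib

open Finset

/-- Weighted degree of a node. -/
noncomputable def deg {V : Type*} [Fintype V] (A : V → V → ℝ) (u : V) : ℝ := ∑ v, A u v

/-- Transition matrix `P t v = A t v / d v` (column-stochastic). -/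
noncomputable def transP {V : Type*} [Fintype V] (A : V → V → ℝ) : Matrix V V ℝ :=
  Matrix.of fun t v => A t v / deg A v

/-- Single-source personalized PageRank: `π_x = Σ_{ℓ≥0} α(1-α)^ℓ P^ℓ e_x`. -/
noncomputable def ppr {V : Type*} [Fintype V] [DecidableEq V]
    (A : V → V → ℝ) (α : ℝ) (x t : V) : ℝ :=
  ∑' ℓ : ℕ, α * (1 - α) ^ ℓ * ((transP A ^ ℓ).mulVec (Pi.single x 1)) t

/-!
Each `π_u` is a probability vector: it is a geometric mixture of the columns of the powers of
the column-stochastic matrix `P`. Subtracting `π̂` from the invariant leaves the nonnegative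
combination `Σ_u r(u) π_u`, whose ℓ1-norm is therefore exactly `Σ_u r(u) ≤ θ Σ_u d(u) = θ‖A‖₁`.
-/

namespace Matrix

variable {n : Type*} [Fintype n] [DecidableEq n] {M : Matrix n n ℝ} {α : ℝ}

lemma summable_geometric_mul_pow_apply (hM : M ∈ colStochastic ℝ n) (hα₀ : 0 < α)
    (hα₁ : α ≤ 1) (t x : n) :
    Summable fun ℓ : ℕ => α * (1 - α) ^ ℓ * (M ^ ℓ) t x := by
  have hweight : ∀ ℓ : ℕ, 0 ≤ α * (1 - α) ^ ℓ := fun ℓ =>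
    mul_nonneg hα₀.le (pow_nonneg (sub_nonneg.2 hα₁) ℓ)
  refine Summable.of_nonneg_of_le
    (fun ℓ => mul_nonneg (hweight ℓ) (nonneg_of_mem_colStochastic (pow_mem hM ℓ)))
    (fun ℓ => mul_le_of_le_one_right (hweight ℓ) (le_one_of_mem_colStochastic (pow_mem hM ℓ)))
    ((summable_geometric_of_lt_one (sub_nonneg.2 hα₁) (by linarith)).mul_left α)

lemma tsum_geometric_mul_pow_apply_nonneg (hM : M ∈ colStochastic ℝ n) (hα₀ : 0 < α)
    (hα₁ : α ≤ 1) (t x : n) :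
    0 ≤ ∑' ℓ : ℕ, α * (1 - α) ^ ℓ * (M ^ ℓ) t x :=
  tsum_nonneg fun ℓ => mul_nonneg (mul_nonneg hα₀.le (pow_nonneg (sub_nonneg.2 hα₁) ℓ))
    (nonneg_of_mem_colStochastic (pow_mem hM ℓ))

lemma sum_tsum_geometric_mul_pow_apply (hM : M ∈ colStochastic ℝ n) (hα₀ : 0 < α)
    (hα₁ : α ≤ 1) (x : n) :
    ∑ t, ∑' ℓ : ℕ, α * (1 - α) ^ ℓ * (M ^ ℓ) t x = 1 := by
  rw [← Summable.tsum_finsetSum fun t _ => summable_geometric_mul_pow_apply hM hα₀ hα₁ t x]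
  simp_rw [← Finset.mul_sum, sum_col_of_mem_colStochastic (pow_mem hM _), mul_one]
  rw [tsum_mul_left, tsum_geometric_of_lt_one (sub_nonneg.2 hα₁) (by linarith), sub_sub_cancel,
    mul_inv_cancel₀ hα₀.ne']

end Matrix

lemma sum_abs_sub_eq_sum_of_eq_add_mixture {V U : Type*} [Fintype V] [Fintype U]
    {p q : V → ℝ} {w : U → ℝ} {π : U → V → ℝ} (hw : ∀ u, 0 ≤ w u) (hπ : ∀ u t, 0 ≤ π u t)
    (hπ_sum : ∀ u, ∑ t, π u t = 1) (hpq : ∀ t, p t = q t + ∑ u, w u * π u t) :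
    ∑ t, |p t - q t| = ∑ u, w u := calc
  ∑ t, |p t - q t| = ∑ t, ∑ u, w u * π u t := by
    refine sum_congr rfl fun t _ => ?_
    rw [hpq t, add_sub_cancel_left]
    exact abs_of_nonneg (sum_nonneg fun u _ => mul_nonneg (hw u) (hπ u t))
  _ = ∑ u, w u := by
    rw [sum_comm]
    simp_rw [← mul_sum, hπ_sum, mul_one]

section PageRank

variable {V : Type*} [Fintype V] [DecidableEq V] {A : V → V → ℝ} {α : ℝ}

lemma transP_mem_colStochastic (hsymm : ∀ u v, A u v = A v u) (hnonneg : ∀ u v, 0 ≤ A u v)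
    (hdeg : ∀ u, 0 < deg A u) : transP A ∈ Matrix.colStochastic ℝ V := by
  refine Matrix.mem_colStochastic_iff_sum.2 ⟨fun t v => div_nonneg (hnonneg t v) (hdeg v).le,
    fun v => ?_⟩
  have hcol : ∑ t, A t v = deg A v := sum_congr rfl fun t _ => hsymm t v
  simp only [transP, Matrix.of_apply, ← sum_div, hcol]
  exact div_self (hdeg v).ne'

lemma ppr_eq_tsum (A : V → V → ℝ) (α : ℝ) (x t : V) :
    ppr A α x t = ∑' ℓ : ℕ, α * (1 - α) ^ ℓ * (transP A ^ ℓ) t x := by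
  simp only [ppr, Matrix.mulVec_single_one, Matrix.col_apply]

lemma ppr_nonneg (hsymm : ∀ u v, A u v = A v u) (hnonneg : ∀ u v, 0 ≤ A u v)
    (hdeg : ∀ u, 0 < deg A u) (hα : α ∈ Set.Ioo (0 : ℝ) 1) (x t : V) : 0 ≤ ppr A α x t := by
  rw [ppr_eq_tsum]
  exact Matrix.tsum_geometric_mul_pow_apply_nonneg (transP_mem_colStochastic hsymm hnonneg hdeg)
    hα.1 hα.2.le t x

lemma sum_ppr_eq_one (hsymm : ∀ u v, A u v = A v u) (hnonneg : ∀ u v, 0 ≤ A u v)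
    (hdeg : ∀ u, 0 < deg A u) (hα : α ∈ Set.Ioo (0 : ℝ) 1) (x : V) : ∑ t, ppr A α x t = 1 := by
  simp_rw [ppr_eq_tsum]
  exact Matrix.sum_tsum_geometric_mul_pow_apply (transP_mem_colStochastic hsymm hnonneg hdeg)
    hα.1 hα.2.le x

end PageRank

theorem localpush_l1_error_general
    {V : Type*} [Fintype V] [DecidableEq V]
    (A : V → V → ℝ)
    (hsymm : ∀ u v : V, A u v = A v u)
    (hnonneg : ∀ u v : V, 0 ≤ A u v)
    (hdeg : ∀ u : V, 0 < deg A u)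
    (α : ℝ) (hα : α ∈ Set.Ioo (0 : ℝ) 1)
    (s : V)
    (normA : ℝ) (hnormA : normA = ∑ u, ∑ v, A u v)
    (θ : ℝ)
    (piHat r : V → ℝ)
    (hinv : ∀ t : V, ppr A α s t = piHat t + ∑ u, r u * ppr A α u t)
    (hr : ∀ u : V, 0 ≤ r u ∧ r u ≤ θ * deg A u) :
    (∑ t, |ppr A α s t - piHat t| ≤ θ * normA) ∧
    (∀ ε : ℝ, 0 < ε → θ = ε / normA →
      ∑ t, |ppr A α s t - piHat t| ≤ ε) := by
  have herror : ∑ t, |ppr A α s t - piHat t| = ∑ u, r u :=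
    sum_abs_sub_eq_sum_of_eq_add_mixture (fun u => (hr u).1)
      (ppr_nonneg hsymm hnonneg hdeg hα) (sum_ppr_eq_one hsymm hnonneg hdeg hα) hinv
  have hbound : ∑ t, |ppr A α s t - piHat t| ≤ θ * normA := by
    rw [herror, hnormA, mul_sum]
    exact sum_le_sum fun u _ => (hr u).2
  refine ⟨hbound, fun ε hε hθ => hbound.trans ?_⟩
  -- `ε / 0 = 0`, so a zero `normA` forces `θ * normA = 0`.
  rcases eq_or_ne normA 0 with h | h
  · simp [h, hε.le]
  · rw [hθ, div_mul_cancel₀ ε h]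

/-- **ℓ1-error of LocalPush (Fact 2.2)**: if the LocalPush invariant holds and every
residue satisfies `0 ≤ r(u) ≤ θ·d(u)`, then the reserve vector `π̂` approximates `π_s`
within ℓ1-error `θ·‖A‖₁`; in particular, for `θ = ε/‖A‖₁` the ℓ1-error is at most `ε`. -/
theorem localpush_l1_error
    {V : Type*} [Fintype V] [DecidableEq V] [Nonempty V]
    (A : V → V → ℝ)
    (hsymm : ∀ u v : V, A u v = A v u)
    (hnonneg : ∀ u v : V, 0 ≤ A u v)
    (hdeg : ∀ u : V, 0 < deg A u)
    (α : ℝ) (hα : α ∈ Set.Ioo (0 : ℝ) 1)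
    (s : V)
    (normA : ℝ) (hnormA : normA = ∑ u, ∑ v, A u v)
    (θ : ℝ) (hθ : 0 ≤ θ)
    (piHat r : V → ℝ)
    (hinv : ∀ t : V, ppr A α s t = piHat t + ∑ u, r u * ppr A α u t)
    (hr : ∀ u : V, 0 ≤ r u ∧ r u ≤ θ * deg A u) :
    (∑ t, |ppr A α s t - piHat t| ≤ θ * normA) ∧
    (∀ ε : ℝ, 0 < ε → θ = ε / normA →
      ∑ t, |ppr A α s t - piHat t| ≤ ε) :=
  localpush_l1_error_general A hsymm hnonneg hdeg α hα s normA hnormA θ piHat r hinv hr
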